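/- Let S*_T, given S*_t = s > 0, be distributed as c·Z where c = e^{τ̄_T} − e^{τ̄_t} > 0 and Z is noncentral chi-square with 4 degrees of freedom and noncentrality parameter λ = s/c. Then for K > 0, s · E[max(0, K − S*_T)/S*_T] = K(Ψ(K/c; 0, λ) − e^{−λ/2}) − s·Ψ(K/c; 4, λ), where Ψ(x; δ, λ) = P(χ²_δ(λ) ≤ x). -/

import Mathlib

open MeasureTheory ProbabilityTheory

/-- The central chi-square law with `d` degrees of freedom: the Gamma distribution
with shape `d/2` and rate `1/2` (for `d = 0` it is the point mass at `0`). -/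
noncomputable def chiSqMeasure (d : ℝ) : Measure ℝ :=
  if d = 0 then Measure.dirac 0 else gammaMeasure (d / 2) (1 / 2)

/-- The noncentral chi-square law with `δ` degrees of freedom and noncentrality `λ`:
the Poisson(λ/2)-mixture of central chi-square laws with `δ + 2k` degrees of freedom. -/
noncomputable def ncChiSqMeasure (δ lam : ℝ) : Measure ℝ :=
  Measure.sum fun k : ℕ =>
    (ENNReal.ofReal (Real.exp (-lam / 2) * (lam / 2) ^ k / (Nat.factorial k : ℝ))) •
      chiSqMeasure (δ + 2 * k)

/-- Noncentral chi-square distribution function `Ψ(x; δ, λ) = P(χ²_δ(λ) ≤ x)`. -/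
noncomputable def Psi (x δ lam : ℝ) : ℝ :=
  (ncChiSqMeasure δ lam (Set.Iic x)).toReal

/-! Writing `χ²₄(λ)` as the Poisson(`λ/2`) mixture of the laws Gamma(`k + 2`, `1/2`), the payoff
`(K - cz)⁺/(cz)` is handled componentwise by the density identity `p_{b+1}(z)/z = p_b(z)/(2b)`:
with `x = K/c`, `E_{b+1}[(K - cZ)⁺/(cZ)] + F_{b+1}(x) = x/(2b) · F_b(x)`. For `λ = s/c` the Poisson
weights satisfy `s · w_k · x/(2(k+1)) = K · w_{k+1}`, so summing over `k` shifts the mixture by one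
index and produces `K` times `Ψ(x; 0, λ)` with its atom `e^{-λ/2}` at `0` removed. The computation
runs in `ℝ≥0∞`, where every series converges, and is transferred to `ℝ` at the end. -/

open scoped ENNReal Nat
open Set

namespace ProbabilityTheory

lemma gammaPDFReal_add_one {b r : ℝ} (hb : 0 < b) (hr : r ≠ 0) (z : ℝ) :
    gammaPDFReal (b + 1) r z = r * z / b * gammaPDFReal b r z := by
  unfold gammaPDFReal
  split_ifs with hz
  · rw [Real.Gamma_add_one hb.ne', add_sub_cancel_right, Real.rpow_add_one hr]
    rcases hz.eq_or_lt with rfl | hz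
    · simp [Real.zero_rpow hb.ne']
    · rw [Real.rpow_sub_one hz.ne']
      field_simp
  · rw [mul_zero]

lemma gammaMeasure_ae_pos (a r : ℝ) : ∀ᵐ z ∂gammaMeasure a r, 0 < z := by
  have hpdf : Measurable (gammaPDF a r) := (measurable_gammaPDFReal a r).ennreal_ofReal
  refine (ae_withDensity_iff hpdf).mpr ?_
  filter_upwards [Measure.ae_ne volume 0] with z hz0 hpdf_ne
  exact lt_of_le_of_ne (not_lt.mp fun hz => hpdf_ne (gammaPDF_of_neg hz)) hz0.symm

lemma withDensity_inv_gammaMeasure_add_one {b r : ℝ} (hb : 0 < b) (hr : 0 < r) :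
    (gammaMeasure (b + 1) r).withDensity (fun z => ENNReal.ofReal z⁻¹) =
      ENNReal.ofReal (r / b) • gammaMeasure b r := by
  have hpdf (a : ℝ) : Measurable (gammaPDF a r) := (measurable_gammaPDFReal a r).ennreal_ofReal
  rw [gammaMeasure, gammaMeasure, ← withDensity_mul _ (hpdf _) (by fun_prop),
    ← withDensity_smul _ (hpdf _)]
  refine withDensity_congr_ae ?_
  filter_upwards [Measure.ae_ne volume 0] with z hz
  simp only [Pi.mul_apply, Pi.smul_apply, smul_eq_mul, gammaPDF]
  rw [← ENNReal.ofReal_mul (gammaPDFReal_nonneg (by linarith) hr z),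
    ← ENNReal.ofReal_mul (by positivity), gammaPDFReal_add_one hb hr.ne']
  congr 1
  field_simp

end ProbabilityTheory

lemma ofReal_put_payoff_add_indicator {c K z : ℝ} (hc : 0 < c) (hz : 0 < z) :
    ENNReal.ofReal (max 0 (K - c * z) / (c * z)) + (Iic (K / c)).indicator 1 z =
      (Iic (K / c)).indicator (fun y => ENNReal.ofReal (K / c) * ENNReal.ofReal y⁻¹) z := by
  by_cases hzK : z ∈ Iic (K / c)
  · have hcz : c * z ≤ K := (le_div_iff₀' hc).mp (mem_Iic.mp hzK)
    rw [indicator_of_mem hzK, indicator_of_mem hzK, Pi.one_apply, ← ENNReal.ofReal_one,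
      ← ENNReal.ofReal_add (by positivity [sub_nonneg.mpr hcz]) zero_le_one,
      ← ENNReal.ofReal_mul (hz.le.trans (mem_Iic.mp hzK)), max_eq_right (sub_nonneg.mpr hcz)]
    congr 1
    field_simp
    ring
  · have hcz : K < c * z := (div_lt_iff₀' hc).mp (not_le.mp (mem_Iic.not.mp hzK))
    rw [indicator_of_notMem hzK, indicator_of_notMem hzK, max_eq_left (by linarith),
      zero_div, ENNReal.ofReal_zero, add_zero]

lemma lintegral_put_payoff_gammaMeasure_add_one {b r c K : ℝ} (hb : 0 < b) (hr : 0 < r)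
    (hc : 0 < c) :
    ∫⁻ z, ENNReal.ofReal (max 0 (K - c * z) / (c * z)) ∂gammaMeasure (b + 1) r
        + gammaMeasure (b + 1) r (Iic (K / c)) =
      ENNReal.ofReal (K / c) * ENNReal.ofReal (r / b) * gammaMeasure b r (Iic (K / c)) := by
  rw [← lintegral_indicator_one measurableSet_Iic, ← lintegral_add_left (by fun_prop),
    lintegral_congr_ae ((gammaMeasure_ae_pos _ _).mono fun z hz =>
      ofReal_put_payoff_add_indicator hc hz),
    lintegral_indicator measurableSet_Iic, lintegral_const_mul _ (by fun_prop),
    ← withDensity_apply _ measurableSet_Iic, withDensity_inv_gammaMeasure_add_one hb hr,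
    Measure.smul_apply, smul_eq_mul, mul_assoc]

lemma chiSqMeasure_of_ne_zero {d : ℝ} (hd : d ≠ 0) :
    chiSqMeasure d = gammaMeasure (d / 2) (1 / 2) :=
  if_neg hd

lemma isProbabilityMeasure_chiSqMeasure {d : ℝ} (hd : 0 ≤ d) :
    IsProbabilityMeasure (chiSqMeasure d) := by
  rcases hd.eq_or_lt with rfl | hd
  · rw [chiSqMeasure, if_pos rfl]
    infer_instance
  · rw [chiSqMeasure_of_ne_zero hd.ne']
    exact isProbabilityMeasure_gammaMeasure (by positivity) one_half_pos

lemma chiSqMeasure_ae_nonneg (d : ℝ) : ∀ᵐ z ∂chiSqMeasure d, 0 ≤ z := by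
  by_cases hd : d = 0
  · rw [chiSqMeasure, if_pos hd, ae_dirac_iff measurableSet_Ici]
  · rw [chiSqMeasure_of_ne_zero hd]
    exact (gammaMeasure_ae_pos _ _).mono fun _ => le_of_lt

noncomputable def ncChiSqWeight (lam : ℝ) (k : ℕ) : ℝ :=
  Real.exp (-lam / 2) * (lam / 2) ^ k / (k ! : ℝ)

lemma ncChiSqWeight_zero (lam : ℝ) : ncChiSqWeight lam 0 = Real.exp (-lam / 2) := by
  simp [ncChiSqWeight]

lemma ncChiSqWeight_succ (lam : ℝ) (k : ℕ) :
    ncChiSqWeight lam (k + 1) = ncChiSqWeight lam k * (lam / 2) / (k + 1) := by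
  rw [ncChiSqWeight, ncChiSqWeight, Nat.factorial_succ, pow_succ]
  push_cast
  field_simp

lemma hasSum_ncChiSqWeight {lam : ℝ} (hlam : 0 ≤ lam) : HasSum (ncChiSqWeight lam) 1 := by
  convert hasSum_one_poissonMeasure ⟨lam / 2, by positivity⟩ using 2 with k
  rw [ncChiSqWeight, neg_div]
  rfl

lemma ncChiSqMeasure_eq_sum (δ lam : ℝ) :
    ncChiSqMeasure δ lam =
      Measure.sum fun k : ℕ => ENNReal.ofReal (ncChiSqWeight lam k) • chiSqMeasure (δ + 2 * k) :=
  rfl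

lemma ncChiSqMeasure_apply (δ lam : ℝ) {s : Set ℝ} (hs : MeasurableSet s) :
    ncChiSqMeasure δ lam s =
      ∑' k : ℕ, ENNReal.ofReal (ncChiSqWeight lam k) * chiSqMeasure (δ + 2 * k) s := by
  simp only [ncChiSqMeasure_eq_sum, Measure.sum_apply _ hs, Measure.smul_apply, smul_eq_mul]

lemma lintegral_ncChiSqMeasure (δ lam : ℝ) (g : ℝ → ℝ≥0∞) :
    ∫⁻ z, g z ∂ncChiSqMeasure δ lam =
      ∑' k : ℕ, ENNReal.ofReal (ncChiSqWeight lam k) * ∫⁻ z, g z ∂chiSqMeasure (δ + 2 * k) := by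
  simp only [ncChiSqMeasure_eq_sum, lintegral_sum_measure, lintegral_smul_measure, smul_eq_mul]

lemma isProbabilityMeasure_ncChiSqMeasure {δ lam : ℝ} (hδ : 0 ≤ δ) (hlam : 0 ≤ lam) :
    IsProbabilityMeasure (ncChiSqMeasure δ lam) := by
  constructor
  have (k : ℕ) := isProbabilityMeasure_chiSqMeasure (d := δ + 2 * k) (by positivity)
  simp only [ncChiSqMeasure_apply δ lam MeasurableSet.univ, measure_univ, mul_one]
  rw [← ENNReal.ofReal_tsum_of_nonneg (fun k => by unfold ncChiSqWeight; positivity)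
    (hasSum_ncChiSqWeight hlam).summable, (hasSum_ncChiSqWeight hlam).tsum_eq, ENNReal.ofReal_one]

lemma ncChiSqMeasure_ae_nonneg (δ lam : ℝ) : ∀ᵐ z ∂ncChiSqMeasure δ lam, 0 ≤ z := by
  rw [ncChiSqMeasure_eq_sum, Measure.ae_sum_iff' measurableSet_Ici]
  exact fun k => Measure.ae_smul_measure (chiSqMeasure_ae_nonneg _) _

lemma chiSqMeasure_four_add_two_mul (k : ℕ) :
    chiSqMeasure (4 + 2 * k) = gammaMeasure ((k + 1 : ℝ) + 1) (1 / 2) := by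
  rw [chiSqMeasure_of_ne_zero (by positivity)]
  ring_nf

lemma ncChiSqMeasure_zero_apply (lam : ℝ) {s : Set ℝ} (hs : MeasurableSet s) :
    ncChiSqMeasure 0 lam s = ENNReal.ofReal (Real.exp (-lam / 2)) * Measure.dirac 0 s +
      ∑' k : ℕ,
        ENNReal.ofReal (ncChiSqWeight lam (k + 1)) * gammaMeasure (k + 1 : ℝ) (1 / 2) s := by
  rw [ncChiSqMeasure_apply _ _ hs, tsum_eq_zero_add' ENNReal.summable]
  congr 1
  · rw [ncChiSqWeight_zero, Nat.cast_zero, mul_zero, add_zero, chiSqMeasure, if_pos rfl]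
  · refine tsum_congr fun k => ?_
    rw [chiSqMeasure_of_ne_zero (by positivity)]
    push_cast
    ring_nf

lemma lintegral_put_payoff_ncChiSqMeasure_four {s c K : ℝ} (hs : 0 ≤ s) (hc : 0 < c) (hK : 0 ≤ K) :
    ENNReal.ofReal s *
        ∫⁻ z, ENNReal.ofReal (max 0 (K - c * z) / (c * z)) ∂ncChiSqMeasure 4 (s / c)
      + ENNReal.ofReal K * ENNReal.ofReal (Real.exp (-(s / c) / 2))
      + ENNReal.ofReal s * ncChiSqMeasure 4 (s / c) (Iic (K / c)) =
    ENNReal.ofReal K * ncChiSqMeasure 0 (s / c) (Iic (K / c)) := by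
  have hweight (k : ℕ) :
      ENNReal.ofReal s * ENNReal.ofReal (ncChiSqWeight (s / c) k) *
          (ENNReal.ofReal (K / c) * ENNReal.ofReal (1 / 2 / (k + 1))) =
        ENNReal.ofReal K * ENNReal.ofReal (ncChiSqWeight (s / c) (k + 1)) := by
    rw [← ENNReal.ofReal_mul hs, ← ENNReal.ofReal_mul (by positivity),
      ← ENNReal.ofReal_mul' (by positivity), ← ENNReal.ofReal_mul hK, ncChiSqWeight_succ]
    congr 1
    field_simp
  rw [lintegral_ncChiSqMeasure, ncChiSqMeasure_apply _ _ measurableSet_Iic,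
    ncChiSqMeasure_zero_apply _ measurableSet_Iic,
    Measure.dirac_apply_of_mem (mem_Iic.mpr (by positivity)), mul_one]
  simp only [chiSqMeasure_four_add_two_mul]
  rw [add_right_comm, ← mul_add, ← ENNReal.tsum_add, ← ENNReal.tsum_mul_left, mul_add,
    add_comm (ENNReal.ofReal K * _), ← ENNReal.tsum_mul_left]
  congr 1
  refine tsum_congr fun k => ?_
  rw [← mul_add, lintegral_put_payoff_gammaMeasure_add_one (by positivity) one_half_pos hc,
    ← mul_assoc (ENNReal.ofReal K), ← hweight]
  ring

theorem bn_put_price_formula (s c K : ℝ) (hs : 0 < s) (hc : 0 < c) (hK : 0 < K) :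
    s * ∫ z, max 0 (K - c * z) / (c * z) ∂(ncChiSqMeasure 4 (s / c)) =
      K * (Psi (K / c) 0 (s / c) - Real.exp (-(s / c) / 2)) -
        s * Psi (K / c) 4 (s / c) := by
  have := isProbabilityMeasure_ncChiSqMeasure (δ := 0) le_rfl (div_pos hs hc).le
  have key := lintegral_put_payoff_ncChiSqMeasure_four hs.le hc hK.le
  have hfin : _ ≠ ∞ := key ▸ ENNReal.mul_ne_top ENNReal.ofReal_ne_top (measure_ne_top _ _)
  simp only [ENNReal.add_ne_top] at hfin
  obtain ⟨⟨hL, hw⟩, hS⟩ := hfin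
  have hint : ∫ z, max 0 (K - c * z) / (c * z) ∂(ncChiSqMeasure 4 (s / c)) =
      (∫⁻ z, ENNReal.ofReal (max 0 (K - c * z) / (c * z)) ∂ncChiSqMeasure 4 (s / c)).toReal :=
    integral_eq_lintegral_of_nonneg_ae
      ((ncChiSqMeasure_ae_nonneg _ _).mono fun z hz => by positivity)
      (by fun_prop : Measurable _).aestronglyMeasurable
  have hreal := congrArg ENNReal.toReal key
  rw [ENNReal.toReal_add (ENNReal.add_ne_top.mpr ⟨hL, hw⟩) hS, ENNReal.toReal_add hL hw] at hreal
  simp only [ENNReal.toReal_mul, ENNReal.toReal_ofReal hs.le, ENNReal.toReal_ofReal hK.le,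
    ENNReal.toReal_ofReal (Real.exp_nonneg _)] at hreal
  rw [Psi, Psi, hint]
  linarith
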